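/- arXiv:1601.07194 — 4 statements merged into one kernel-verified Lean document; each statement's English description precedes it below -/
import Mathlib

section
/- Let u and v = λ(x)u be quasi-definite moment functionals on Π^d, where λ(x) = a_2·𝕏_2 + a_1·𝕏_1 + a_0 has exact total degree 2 (a_2 ≠ 0), and let the monic OPS {ℙ_n} of u and {ℚ_n} of v be related by ℙ_n = ℚ_n + M_n ℚ_{n−1} + N_n ℚ_{n−2}. Then for every n ≥ 2 one has N_n Ĥ_{n−2} = H_n A_{n−2,2}^t, where Ĥ_m = ⟨v, ℚ_m ℚ_m^t⟩; consequently N_n has full rank r_{n−2}^d for all n ≥ 2, and in particular N_2 = H_2 a_2^t Ĥ_0^{−1}. -/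
open MvPolynomial Matrix

/-- The index set for monomials of total degree `n` in `d` variables:
multi-indices (exponent tuples) summing to `n`. Its cardinality is `r_n^d = C(n+d-1,n)`. -/
abbrev Idx (d n : ℕ) : Type := {ν : Fin d → ℕ // ν ∈ Finset.Nat.antidiagonalTuple d n}

/-- The monomial `x^ν` associated with a multi-index `ν` of total degree `n`;
the family `fun α : Idx d n => monIdx α` is the canonical vector `𝕏_n`. -/
noncomputable def monIdx {d n : ℕ} (α : Idx d n) : MvPolynomial (Fin d) ℝ :=
  MvPolynomial.monomial (Finsupp.equivFunOnFinite.symm α.1) 1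

/-- A polynomial system (PS): a sequence of vectors `ℙ_n` of size `r_n^d` whose
entries are polynomials of total degree `n`, the entries of `ℙ_0,…,ℙ_n` forming a
basis of the polynomials of total degree at most `n`. -/
structure PolySystem (d : ℕ) where
  vec : (n : ℕ) → Idx d n → MvPolynomial (Fin d) ℝ
  degree_eq : ∀ n α, (vec n α).totalDegree = n
  indep : LinearIndependent ℝ (fun p : (Σ n : ℕ, Idx d n) => vec p.1 p.2)
  spans : ∀ (n : ℕ) (p : MvPolynomial (Fin d) ℝ), p.totalDegree ≤ n →
    p ∈ Submodule.span ℝ {q | ∃ m ≤ n, ∃ α : Idx d m, q = vec m α}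

/-- `{ℙ_n}` is an orthogonal polynomial system (OPS) with respect to the moment
functional `u` : `⟨u, 𝕏_m ℙ_n^t⟩ = 0` for `m < n` and `⟨u, 𝕏_n ℙ_n^t⟩` nonsingular. -/
def IsOPS {d : ℕ} (u : MvPolynomial (Fin d) ℝ →ₗ[ℝ] ℝ) (P : PolySystem d) : Prop :=
  (∀ m n : ℕ, m < n → ∀ (α : Idx d m) (β : Idx d n), u (monIdx α * P.vec n β) = 0) ∧
  (∀ n : ℕ, IsUnit (Matrix.of fun α β : Idx d n => u (monIdx α * P.vec n β)).det)

/-- `u` is quasi-definite iff it admits an OPS. -/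
def QuasiDefinite {d : ℕ} (u : MvPolynomial (Fin d) ℝ →ₗ[ℝ] ℝ) : Prop :=
  ∃ P : PolySystem d, IsOPS u P

/-- `H_n = ⟨u, ℙ_n ℙ_n^t⟩`. -/
noncomputable def Hmat {d : ℕ} (u : MvPolynomial (Fin d) ℝ →ₗ[ℝ] ℝ) (P : PolySystem d)
    (n : ℕ) : Matrix (Idx d n) (Idx d n) ℝ :=
  Matrix.of fun α β => u (P.vec n α * P.vec n β)

/-- `P_m(u;x,y) = ℙ_m(x)^t H_m⁻¹ ℙ_m(y)`. -/
noncomputable def kerP {d : ℕ} (u : MvPolynomial (Fin d) ℝ →ₗ[ℝ] ℝ) (P : PolySystem d)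
    (m : ℕ) (x y : Fin d → ℝ) : ℝ :=
  ∑ α, ∑ β, eval x (P.vec m α) * (Hmat u P m)⁻¹ α β * eval y (P.vec m β)

/-- `kerLT u P n = K_{n-1}(u;·,·) = Σ_{m<n} P_m(u;·,·)`, so that `kerLT u P 0 = K_{-1} = 0`. -/
noncomputable def kerLT {d : ℕ} (u : MvPolynomial (Fin d) ℝ →ₗ[ℝ] ℝ) (P : PolySystem d)
    (n : ℕ) (x y : Fin d → ℝ) : ℝ :=
  ∑ m ∈ Finset.range n, kerP u P m x y

/-- `𝖯_n(ξ) = (ℙ_n(ξ_1)|⋯|ℙ_n(ξ_N))`. -/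
noncomputable def Pmat {d N : ℕ} (P : PolySystem d) (ξ : Fin N → (Fin d → ℝ)) (n : ℕ) :
    Matrix (Idx d n) (Fin N) ℝ :=
  Matrix.of fun α i => eval (ξ i) (P.vec n α)

/-- `Kmat u P ξ n = 𝒦_{n-1} = (K_{n-1}(u;ξ_i,ξ_j))_{i,j}`, with `𝒦_{-1} = 0`. -/
noncomputable def Kmat {d N : ℕ} (u : MvPolynomial (Fin d) ℝ →ₗ[ℝ] ℝ) (P : PolySystem d)
    (ξ : Fin N → (Fin d → ℝ)) (n : ℕ) : Matrix (Fin N) (Fin N) ℝ :=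
  Matrix.of fun i j => kerLT u P n (ξ i) (ξ j)

/-- `Kvec u P ξ n x = 𝖪_{n-1}(ξ,x) = (K_{n-1}(u;ξ_1,x),…,K_{n-1}(u;ξ_N,x))^t`, with `𝖪_{-1}=0`. -/
noncomputable def Kvec {d N : ℕ} (u : MvPolynomial (Fin d) ℝ →ₗ[ℝ] ℝ) (P : PolySystem d)
    (ξ : Fin N → (Fin d → ℝ)) (n : ℕ) (x : Fin d → ℝ) : Fin N → ℝ :=
  fun i => kerLT u P n (ξ i) x

/-- A PS is monic if the degree-`n` homogeneous part of the entry of `ℙ_n` indexed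
by `α` is exactly the monomial `x^α`. -/
def PolySystem.IsMonic {d : ℕ} (P : PolySystem d) : Prop :=
  ∀ (n : ℕ) (α : Idx d n) (ν : Fin d →₀ ℕ), (ν.sum fun _ e => e) = n →
    MvPolynomial.coeff ν (P.vec n α) = if ν = Finsupp.equivFunOnFinite.symm α.1 then 1 else 0

/-- Multiplication of a real matrix times a vector of polynomials. -/
noncomputable def matVec {d : ℕ} {a b : Type} [Fintype b] (M : Matrix a b ℝ)
    (w : b → MvPolynomial (Fin d) ℝ) (i : a) : MvPolynomial (Fin d) ℝ :=
  ∑ j, M i j • w j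

/-- The matrix `L_{n,i}` determined by `x_i 𝕏_n = L_{n,i} 𝕏_{n+1}`. -/
noncomputable def Lmat (d n : ℕ) (i : Fin d) : Matrix (Idx d n) (Idx d (n + 1)) ℝ :=
  Matrix.of fun α β => if β.1 = (fun j => α.1 j + if j = i then 1 else 0) then 1 else 0

/-- The unique multi-index of degree 0. -/
def zeroIdx {d : ℕ} : Idx d 0 :=
  ⟨fun _ => 0, by simp [Finset.Nat.mem_antidiagonalTuple]⟩

/-- The degree-2 multi-index `e_i + e_j`. -/
def e2 {d : ℕ} (i j : Fin d) : Idx d 2 :=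
  ⟨fun k => (if k = i then 1 else 0) + (if k = j then 1 else 0), by
    simp [Finset.Nat.mem_antidiagonalTuple, Finset.sum_add_distrib]⟩

/-- `A_{h,2} = Σ_{1≤i≤j≤d} a^{(2)}_{ij} L_{h,j} L_{h+1,i}`. -/
noncomputable def Amat2 {d : ℕ} (a2 : Idx d 2 → ℝ) (h : ℕ) :
    Matrix (Idx d h) (Idx d (h + 2)) ℝ :=
  ∑ i : Fin d, ∑ j : Fin d,
    if i ≤ j then a2 (e2 i j) • (Lmat d h j * Lmat d (h + 1) i) else 0

/-- The polynomial `λ(x) = a_2·𝕏_2 + a_1·𝕏_1 + a_0`. -/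
noncomputable def lamPoly {d : ℕ} (a2 : Idx d 2 → ℝ) (a1 : Idx d 1 → ℝ) (a0 : ℝ) :
    MvPolynomial (Fin d) ℝ :=
  (∑ α : Idx d 2, a2 α • monIdx α) + (∑ α : Idx d 1, a1 α • monIdx α) + MvPolynomial.C a0

/-!
Pairing `ℙ_{n+2} = ℚ_{n+2} + M ℚ_{n+1} + N ℚ_n` with `ℚ_n` under `v`, orthogonality of `ℚ` kills
the first two terms, so `N Ĥ_n = ⟨v, ℙ_{n+2} ℚ_nᵗ⟩ = ⟨u, ℙ_{n+2} (λ ℚ_n)ᵗ⟩`. Since `ℚ_n` is monic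
and `x_i x_j 𝕏_n = L_{n,j} L_{n+1,i} 𝕏_{n+2}`, `λ ℚ_n` agrees with `A_{n,2} 𝕏_{n+2}` up to terms of
degree at most `n + 1`, which are orthogonal to `ℙ_{n+2}`; and `⟨u, ℙ_{n+2} 𝕏_{n+2}ᵗ⟩ = H_{n+2}`
because `ℙ` is monic. The rows of `A_{n,2}` are the coefficient vectors of the products
`(a_2·𝕏_2) x^γ`, which are linearly independent since the polynomial ring is a domain; hence `N`
has full rank. For `n = 0` the single row of `A_{0,2}` is `a_2` itself.
-/

section

variable {d : ℕ}

namespace Idx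

noncomputable def toFinsupp {n : ℕ} (γ : Idx d n) : Fin d →₀ ℕ := Finsupp.equivFunOnFinite.symm γ.1

lemma toFinsupp_injective {n : ℕ} : Function.Injective (toFinsupp : Idx d n → Fin d →₀ ℕ) :=
  fun _ _ h => Subtype.ext (Finsupp.equivFunOnFinite.symm.injective h)

lemma degree_toFinsupp {n : ℕ} (γ : Idx d n) : γ.toFinsupp.degree = n := by
  rw [Finsupp.degree_eq_sum]
  exact Finset.Nat.mem_antidiagonalTuple.mp γ.2

def ofFinsupp (ν : Fin d →₀ ℕ) : Idx d ν.degree :=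
  ⟨ν, Finset.Nat.mem_antidiagonalTuple.mpr (Finsupp.degree_eq_sum ν).symm⟩

lemma toFinsupp_ofFinsupp (ν : Fin d →₀ ℕ) : (ofFinsupp ν).toFinsupp = ν :=
  Finsupp.equivFunOnFinite_symm_coe ν

end Idx

lemma monIdx_eq_monomial {n : ℕ} (γ : Idx d n) : monIdx γ = monomial γ.toFinsupp 1 := rfl

lemma coeff_sum_smul_monIdx {n : ℕ} (c : Idx d n → ℝ) (γ : Idx d n) :
    coeff γ.toFinsupp (∑ α, c α • monIdx α) = c γ := by
  classical
  simp only [coeff_sum, coeff_smul, monIdx_eq_monomial, coeff_monomial,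
    Idx.toFinsupp_injective.eq_iff, smul_eq_mul, mul_ite, mul_one, mul_zero,
    Finset.sum_ite_eq', Finset.mem_univ, if_true]

lemma totalDegree_monIdx {n : ℕ} (γ : Idx d n) : (monIdx γ).totalDegree = n := by
  rw [monIdx_eq_monomial, totalDegree_monomial _ one_ne_zero]
  exact γ.degree_toFinsupp

lemma totalDegree_sum_smul_monIdx_le {n : ℕ} (c : Idx d n → ℝ) :
    (∑ α, c α • monIdx α).totalDegree ≤ n := by
  refine (totalDegree_finsetSum _ _).trans (Finset.sup_le fun α _ => ?_)
  exact (totalDegree_smul_le _ _).trans (totalDegree_monIdx α).le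

lemma Idx.toFinsupp_e2 (i j : Fin d) :
    (e2 i j).toFinsupp = Finsupp.single i 1 + Finsupp.single j 1 := by
  ext k
  simp [Idx.toFinsupp, e2, Finsupp.single_apply, eq_comm]

lemma monIdx_e2 (i j : Fin d) : monIdx (e2 i j) = X i * X j := by
  rw [monIdx_eq_monomial, Idx.toFinsupp_e2, ← one_mul (1 : ℝ), ← monomial_mul]
  rfl

lemma e2_inj_of_le {i j k l : Fin d} (hij : i ≤ j) (hkl : k ≤ l) (h : e2 i j = e2 k l) :
    i = k ∧ j = l := by
  have h' := congrArg (fun γ => Finsupp.toMultiset γ.toFinsupp) h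
  simp only [Idx.toFinsupp_e2, map_add, Finsupp.toMultiset_single, one_smul] at h'
  have hi : i ∈ ({k} + {l} : Multiset (Fin d)) := h' ▸ by simp
  have hk : k ∈ ({i} + {j} : Multiset (Fin d)) := h'.symm ▸ by simp
  simp only [Multiset.mem_add, Multiset.mem_singleton] at hi hk
  have hik : i = k := by
    rcases hi with hi | rfl
    · exact hi
    · rcases hk with rfl | rfl
      · rfl
      · exact le_antisymm hij hkl
  subst hik
  exact ⟨rfl, Multiset.singleton_inj.mp (add_left_cancel h')⟩

lemma exists_e2_eq (δ : Idx d 2) : ∃ i j, i ≤ j ∧ e2 i j = δ := by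
  obtain ⟨i, j, hij⟩ := Multiset.card_eq_two.mp
    ((Finsupp.card_toMultiset _).trans δ.degree_toFinsupp)
  have hδ : δ.toFinsupp = Finsupp.single i 1 + Finsupp.single j 1 := by
    rw [← Finsupp.toMultiset_toFinsupp δ.toFinsupp, hij, Multiset.insert_eq_cons,
      ← Multiset.singleton_add, map_add, Multiset.toFinsupp_singleton, Multiset.toFinsupp_singleton]
  rcases le_total i j with h | h
  · exact ⟨i, j, h, Idx.toFinsupp_injective (by rw [Idx.toFinsupp_e2, hδ])⟩
  · exact ⟨j, i, h, Idx.toFinsupp_injective (by rw [Idx.toFinsupp_e2, hδ, add_comm])⟩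

lemma sum_sum_ite_le_e2 {M : Type*} [AddCommMonoid M] (F : Idx d 2 → M) :
    (∑ i : Fin d, ∑ j : Fin d, if i ≤ j then F (e2 i j) else 0) = ∑ δ, F δ := by
  classical
  rw [← Finset.sum_product', ← Finset.sum_filter]
  refine Finset.sum_bij (fun p _ => e2 p.1 p.2) (fun _ _ => Finset.mem_univ _) ?_ ?_
    (fun _ _ => rfl)
  · rintro ⟨i, j⟩ hij ⟨k, l⟩ hkl h
    obtain ⟨rfl, rfl⟩ := e2_inj_of_le (Finset.mem_filter.mp hij).2 (Finset.mem_filter.mp hkl).2 h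
    rfl
  · intro δ _
    obtain ⟨i, j, hij, rfl⟩ := exists_e2_eq δ
    exact ⟨(i, j), by simpa using hij, rfl⟩

section MatVec

variable {a b c : Type} [Fintype b] [Fintype c]

lemma matVec_mul (A : Matrix a b ℝ) (B : Matrix b c ℝ) (w : c → MvPolynomial (Fin d) ℝ) :
    matVec (A * B) w = matVec A (matVec B w) := by
  funext i
  simp only [matVec, Matrix.mul_apply, Finset.sum_smul, Finset.smul_sum, smul_smul]
  exact Finset.sum_comm

lemma matVec_mul_left (A : Matrix a b ℝ) (p : MvPolynomial (Fin d) ℝ)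
    (w : b → MvPolynomial (Fin d) ℝ) :
    matVec A (fun j => p * w j) = fun i => p * matVec A w i := by
  funext i
  simp only [matVec, Finset.mul_sum, mul_smul_comm]

lemma matVec_smul (r : ℝ) (A : Matrix a b ℝ) (w : b → MvPolynomial (Fin d) ℝ) :
    matVec (r • A) w = r • matVec A w := by
  funext i
  simp only [matVec, Matrix.smul_apply, Pi.smul_apply, Finset.smul_sum, smul_smul, smul_eq_mul]

lemma matVec_sum {ι : Type*} (s : Finset ι) (A : ι → Matrix a b ℝ)
    (w : b → MvPolynomial (Fin d) ℝ) :
    matVec (∑ k ∈ s, A k) w = ∑ k ∈ s, matVec (A k) w := by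
  funext i
  simp only [matVec, Matrix.sum_apply, Finset.sum_apply, Finset.sum_smul]
  exact Finset.sum_comm

lemma matVec_zero (w : b → MvPolynomial (Fin d) ℝ) : matVec (0 : Matrix a b ℝ) w = 0 := by
  funext i
  simp [matVec]

lemma sum_smul_matVec [Fintype a] (r : a → ℝ) (A : Matrix a b ℝ)
    (w : b → MvPolynomial (Fin d) ℝ) :
    ∑ i, r i • matVec A w i = ∑ j, (r ᵥ* A) j • w j := by
  simp only [matVec, Matrix.vecMul, dotProduct, Finset.smul_sum, Finset.sum_smul, smul_smul]
  exact Finset.sum_comm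

lemma map_matVec_mul (u : MvPolynomial (Fin d) ℝ →ₗ[ℝ] ℝ) (A : Matrix a b ℝ)
    (w : b → MvPolynomial (Fin d) ℝ) (q : MvPolynomial (Fin d) ℝ) (i : a) :
    u (matVec A w i * q) = ∑ j, A i j * u (w j * q) := by
  simp only [matVec, Finset.sum_mul, map_sum, smul_mul_assoc, map_smul, smul_eq_mul]

end MatVec

lemma matVec_Lmat_monIdx (n : ℕ) (i : Fin d) :
    matVec (Lmat d n i) monIdx = fun γ : Idx d n => X i * monIdx γ := by
  classical
  funext γ
  let β₀ : Idx d (n + 1) := ⟨fun j => γ.1 j + if j = i then 1 else 0, by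
    rw [Finset.Nat.mem_antidiagonalTuple, Finset.sum_add_distrib, Finset.sum_ite_eq',
      Finset.Nat.mem_antidiagonalTuple.mp γ.2]
    simp⟩
  have hβ₀ : β₀.toFinsupp = Finsupp.single i 1 + γ.toFinsupp := by
    ext j
    simp [Idx.toFinsupp, β₀, Finsupp.single_apply, eq_comm, add_comm]
  have hcond : ∀ β : Idx d (n + 1), (β.1 = fun j => γ.1 j + if j = i then 1 else 0) ↔ β = β₀ :=
    fun β => by rw [Subtype.ext_iff]
  simp only [matVec, Lmat, Matrix.of_apply, hcond, ite_smul, one_smul, zero_smul,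
    Finset.sum_ite_eq', Finset.mem_univ, if_true]
  rw [monIdx_eq_monomial, hβ₀, monomial_single_add, pow_one]
  rfl

lemma matVec_Amat2_monIdx (a2 : Idx d 2 → ℝ) (h : ℕ) :
    matVec (Amat2 a2 h) monIdx = fun γ : Idx d h => (∑ α, a2 α • monIdx α) * monIdx γ := by
  funext γ
  simp only [Amat2, matVec_sum, apply_ite (fun A => matVec A monIdx), matVec_smul, matVec_mul,
    matVec_Lmat_monIdx, matVec_mul_left, matVec_zero, Finset.sum_apply]
  rw [Finset.sum_mul, ← sum_sum_ite_le_e2]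
  simp only [apply_ite (fun f : Idx d h → MvPolynomial (Fin d) ℝ => f γ), Pi.smul_apply,
    Pi.zero_apply, monIdx_e2, smul_mul_assoc, mul_assoc]

lemma sum_smul_monIdx_eq_zero_iff {n : ℕ} (c : Idx d n → ℝ) :
    ∑ α, c α • monIdx α = 0 ↔ c = 0 := by
  refine ⟨fun h => funext fun γ => ?_, fun h => by simp [h]⟩
  rw [← coeff_sum_smul_monIdx c γ, h, coeff_zero, Pi.zero_apply]

lemma Amat2_apply_eq_coeff (a2 : Idx d 2 → ℝ) (h : ℕ) (γ : Idx d h) (δ : Idx d (h + 2)) :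
    Amat2 a2 h γ δ = coeff δ.toFinsupp ((∑ α, a2 α • monIdx α) * monIdx γ) := by
  rw [← congrFun (matVec_Amat2_monIdx a2 h) γ, matVec, coeff_sum_smul_monIdx]

lemma transpose_Amat2_zero (a2 : Idx d 2 → ℝ) :
    (Amat2 a2 0)ᵀ = Matrix.of fun (α : Idx d 2) (_ : Idx d 0) => a2 α := by
  ext δ γ
  have hγ : monIdx γ = 1 := by
    rw [monIdx_eq_monomial, (Finsupp.degree_eq_zero_iff _).mp γ.degree_toFinsupp, one_def]
  rw [transpose_apply, Amat2_apply_eq_coeff, hγ, mul_one, coeff_sum_smul_monIdx, of_apply]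

lemma linearIndependent_row_Amat2 {a2 : Idx d 2 → ℝ} (ha2 : a2 ≠ 0) (h : ℕ) :
    LinearIndependent ℝ (Amat2 a2 h).row := by
  rw [Fintype.linearIndependent_iff]
  intro c hc
  have hvec : c ᵥ* Amat2 a2 h = 0 := by rw [vecMul_eq_sum]; exact hc
  have hlam : ∑ α, a2 α • monIdx α ≠ 0 := (sum_smul_monIdx_eq_zero_iff a2).not.mpr ha2
  have hprod : (∑ α, a2 α • monIdx α) * ∑ γ, c γ • monIdx γ = 0 := by
    calc (∑ α, a2 α • monIdx α) * ∑ γ, c γ • monIdx γ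
        = ∑ γ, c γ • matVec (Amat2 a2 h) monIdx γ := by
          simp only [matVec_Amat2_monIdx, Finset.mul_sum, mul_smul_comm]
      _ = 0 := by
          simp only [sum_smul_matVec, hvec, Pi.zero_apply, zero_smul, Finset.sum_const_zero]
  exact congrFun ((sum_smul_monIdx_eq_zero_iff c).mp
    ((mul_eq_zero.mp hprod).resolve_left hlam))

-- Through supports, so that `degreeLT d 0 = ⊥`; `totalDegree p < 0` would exclude `p = 0` too.
noncomputable def degreeLT (d n : ℕ) : Submodule ℝ (MvPolynomial (Fin d) ℝ) :=
  restrictSupport ℝ {ν | ν.degree < n}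

lemma mem_degreeLT {n : ℕ} {p : MvPolynomial (Fin d) ℝ} :
    p ∈ degreeLT d n ↔ ∀ ν ∈ p.support, ν.degree < n :=
  mem_restrictSupport_iff ℝ

lemma mem_degreeLT_of_totalDegree_lt {n : ℕ} {p : MvPolynomial (Fin d) ℝ}
    (h : p.totalDegree < n) : p ∈ degreeLT d n :=
  mem_degreeLT.mpr fun _ hν => (le_totalDegree hν).trans_lt h

lemma mul_mem_degreeLT {a b : ℕ} {p q : MvPolynomial (Fin d) ℝ} (hp : p.totalDegree ≤ a)
    (hq : q ∈ degreeLT d b) : p * q ∈ degreeLT d (a + b) := by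
  classical
  refine mem_degreeLT.mpr fun ν hν => ?_
  obtain ⟨μ, hμ, σ, hσ, rfl⟩ := Finset.mem_add.mp (support_mul p q hν)
  rw [map_add]
  exact add_lt_add_of_le_of_lt ((le_totalDegree hμ).trans hp) (mem_degreeLT.mp hq σ hσ)

lemma PolySystem.vec_mem_degreeLT (P : PolySystem d) (n : ℕ) (γ : Idx d n) :
    P.vec n γ ∈ degreeLT d (n + 1) :=
  mem_degreeLT_of_totalDegree_lt ((P.degree_eq n γ).trans_lt n.lt_succ_self)

lemma PolySystem.IsMonic.sub_monIdx_mem_degreeLT {P : PolySystem d} (hP : P.IsMonic) (n : ℕ)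
    (γ : Idx d n) : P.vec n γ - monIdx γ ∈ degreeLT d n := by
  classical
  refine mem_degreeLT.mpr fun ν hν => lt_of_not_ge fun hle => mem_support_iff.mp hν ?_
  rcases hle.eq_or_lt with h | h
  · rw [coeff_sub, hP n γ ν h.symm, monIdx_eq_monomial, coeff_monomial]
    simp [Idx.toFinsupp, eq_comm]
  · have hdeg : ∀ p : MvPolynomial (Fin d) ℝ, p.totalDegree ≤ n → coeff ν p = 0 :=
      fun p hp => coeff_eq_zero_of_totalDegree_lt (hp.trans_lt h)
    rw [coeff_sub, hdeg _ (P.degree_eq n γ).le, hdeg _ (totalDegree_monIdx γ).le, sub_zero]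

namespace IsOPS

variable {u : MvPolynomial (Fin d) ℝ →ₗ[ℝ] ℝ} {P : PolySystem d}

lemma map_mul_vec_eq_zero (hP : IsOPS u P) {n : ℕ} {q : MvPolynomial (Fin d) ℝ}
    (hq : q ∈ degreeLT d n) (β : Idx d n) : u (q * P.vec n β) = 0 := by
  suffices degreeLT d n ≤ LinearMap.ker (u ∘ₗ LinearMap.mulRight ℝ (P.vec n β)) from this hq
  rw [degreeLT, restrictSupport_eq_span, Submodule.span_le]
  rintro _ ⟨ν, hν, rfl⟩
  simpa [monIdx_eq_monomial, Idx.toFinsupp_ofFinsupp] using hP.1 _ n hν (Idx.ofFinsupp ν) β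

lemma map_vec_mul_vec_eq_zero (hP : IsOPS u P) {m n : ℕ} (h : m < n) (β : Idx d n)
    (γ : Idx d m) : u (P.vec n β * P.vec m γ) = 0 := by
  rw [mul_comm]
  exact hP.map_mul_vec_eq_zero (mem_degreeLT_of_totalDegree_lt ((P.degree_eq m γ).trans_lt h)) β

lemma map_monIdx_mul_vec (hP : IsOPS u P) (hm : P.IsMonic) {n : ℕ} (α β : Idx d n) :
    u (monIdx α * P.vec n β) = Hmat u P n α β := by
  have h := hP.map_mul_vec_eq_zero (hm.sub_monIdx_mem_degreeLT n α) β
  rw [sub_mul, map_sub, sub_eq_zero] at h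
  exact h.symm

lemma isUnit_det_Hmat (hP : IsOPS u P) (hm : P.IsMonic) (n : ℕ) : IsUnit (Hmat u P n).det := by
  have hH : Hmat u P n = of fun α β : Idx d n => u (monIdx α * P.vec n β) := by
    ext α β
    exact (hP.map_monIdx_mul_vec hm α β).symm
  exact hH ▸ hP.2 n

end IsOPS

lemma isSymm_Hmat (u : MvPolynomial (Fin d) ℝ →ₗ[ℝ] ℝ) (P : PolySystem d) (n : ℕ) :
    (Hmat u P n).IsSymm :=
  Matrix.IsSymm.ext fun α β => by simp only [Hmat, of_apply, mul_comm]

lemma lamPoly_mul_vec_sub_mem_degreeLT (a2 : Idx d 2 → ℝ) (a1 : Idx d 1 → ℝ) (a0 : ℝ)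
    {Q : PolySystem d} (hQ : Q.IsMonic) (n : ℕ) (γ : Idx d n) :
    lamPoly a2 a1 a0 * Q.vec n γ - ∑ δ, Amat2 a2 n γ δ • monIdx δ ∈ degreeLT d (n + 2) := by
  have hsplit : lamPoly a2 a1 a0 * Q.vec n γ - ∑ δ, Amat2 a2 n γ δ • monIdx δ =
      (∑ α, a2 α • monIdx α) * (Q.vec n γ - monIdx γ) +
        ((∑ α, a1 α • monIdx α) + C a0) * Q.vec n γ := by
    rw [← matVec, matVec_Amat2_monIdx, lamPoly]
    ring
  have hlow : ((∑ α, a1 α • monIdx α) + C a0).totalDegree ≤ 1 :=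
    (totalDegree_add _ _).trans
      (max_le (totalDegree_sum_smul_monIdx_le a1) ((totalDegree_C a0).trans_le zero_le_one))
  rw [hsplit, show n + 2 = 2 + n by omega]
  refine add_mem (mul_mem_degreeLT (totalDegree_sum_smul_monIdx_le a2)
    (hQ.sub_monIdx_mem_degreeLT n γ)) ?_
  rw [show 2 + n = 1 + (n + 1) by omega]
  exact mul_mem_degreeLT hlow (Q.vec_mem_degreeLT n γ)

theorem Nmat_mul_Hmat (u v : MvPolynomial (Fin d) ℝ →ₗ[ℝ] ℝ)
    (a2 : Idx d 2 → ℝ) (a1 : Idx d 1 → ℝ) (a0 : ℝ)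
    (hv : ∀ p : MvPolynomial (Fin d) ℝ, v p = u (lamPoly a2 a1 a0 * p))
    {P : PolySystem d} (hP : IsOPS u P) (hPmonic : P.IsMonic)
    {Q : PolySystem d} (hQ : IsOPS v Q) (hQmonic : Q.IsMonic)
    {n : ℕ} (M : Matrix (Idx d (n + 2)) (Idx d (n + 1)) ℝ)
    (N : Matrix (Idx d (n + 2)) (Idx d n) ℝ)
    (hconn : ∀ α, P.vec (n + 2) α = Q.vec (n + 2) α + matVec M (Q.vec (n + 1)) α +
      matVec N (Q.vec n) α) :
    N * Hmat v Q n = Hmat u P (n + 2) * (Amat2 a2 n)ᵀ := by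
  ext α γ
  set r := lamPoly a2 a1 a0 * Q.vec n γ - ∑ δ, Amat2 a2 n γ δ • monIdx δ
  calc (N * Hmat v Q n) α γ = v (P.vec (n + 2) α * Q.vec n γ) := by
        simp only [hconn, add_mul, map_add, map_matVec_mul, mul_apply,
          hQ.map_vec_mul_vec_eq_zero (Nat.lt_add_of_pos_right two_pos),
          hQ.map_vec_mul_vec_eq_zero n.lt_succ_self, mul_zero, Finset.sum_const_zero, zero_add]
        rfl
    _ = u ((∑ δ, Amat2 a2 n γ δ • monIdx δ + r) * P.vec (n + 2) α) := by
        rw [hv, add_sub_cancel]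
        congr 1
        ring
    _ = ∑ δ, Amat2 a2 n γ δ * Hmat u P (n + 2) δ α := by
        rw [add_mul, map_add, hP.map_mul_vec_eq_zero
          (lamPoly_mul_vec_sub_mem_degreeLT a2 a1 a0 hQmonic n γ) α, add_zero, Finset.sum_mul,
          map_sum]
        simp only [smul_mul_assoc, map_smul, hP.map_monIdx_mul_vec hPmonic, smul_eq_mul]
    _ = (Hmat u P (n + 2) * (Amat2 a2 n)ᵀ) α γ := by
        simp only [mul_apply, transpose_apply, (isSymm_Hmat u P _).apply, mul_comm]

end

-- `Nmat n` is the paper's `N_{n+2}` and `M n` its `M_{n+1}`.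
theorem christoffel_Nn_formula_general
    {d : ℕ}
    (u v : MvPolynomial (Fin d) ℝ →ₗ[ℝ] ℝ)
    (a2 : Idx d 2 → ℝ) (a1 : Idx d 1 → ℝ) (a0 : ℝ) (ha2 : a2 ≠ 0)
    (hv : ∀ p : MvPolynomial (Fin d) ℝ, v p = u (lamPoly a2 a1 a0 * p))
    (P : PolySystem d) (hP : IsOPS u P) (hPmonic : P.IsMonic)
    (Q : PolySystem d) (hQ : IsOPS v Q) (hQmonic : Q.IsMonic)
    (M : (n : ℕ) → Matrix (Idx d (n + 1)) (Idx d n) ℝ)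
    (Nmat : (n : ℕ) → Matrix (Idx d (n + 2)) (Idx d n) ℝ)
    (hconn : ∀ (n : ℕ) (α : Idx d (n + 2)),
      P.vec (n + 2) α = Q.vec (n + 2) α + matVec (M (n + 1)) (Q.vec (n + 1)) α +
        matVec (Nmat n) (Q.vec n) α) :
    (∀ n : ℕ, Nmat n * Hmat v Q n = Hmat u P (n + 2) * (Amat2 a2 n)ᵀ) ∧
    (∀ n : ℕ, (Nmat n).rank = Fintype.card (Idx d n)) ∧
    Nmat 0 = Hmat u P 2 * (Matrix.of fun (α : Idx d 2) (_ : Idx d 0) => a2 α) *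
      (Hmat v Q 0)⁻¹ := by
  have hNH n : Nmat n * Hmat v Q n = Hmat u P (n + 2) * (Amat2 a2 n)ᵀ :=
    Nmat_mul_Hmat u v a2 a1 a0 hv hP hPmonic hQ hQmonic (M (n + 1)) (Nmat n) (hconn n)
  have hN n : Nmat n = Hmat u P (n + 2) * (Amat2 a2 n)ᵀ * (Hmat v Q n)⁻¹ := by
    rw [← hNH, Matrix.mul_nonsing_inv_cancel_right _ _ (hQ.isUnit_det_Hmat hQmonic n)]
  refine ⟨hNH, fun n => ?_, by rw [hN, transpose_Amat2_zero]⟩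
  rw [hN, Matrix.mul_assoc,
    rank_mul_eq_right_of_isUnit_det _ _ (hP.isUnit_det_Hmat hPmonic (n + 2)),
    rank_mul_eq_left_of_isUnit_det _ _ (isUnit_nonsing_inv_det _ (hQ.isUnit_det_Hmat hQmonic n)),
    rank_transpose, (linearIndependent_row_Amat2 ha2 n).rank_matrix]

/-- Let `u` and `v = λ(x)u` be quasi-definite, with
`λ(x) = a_2·𝕏_2 + a_1·𝕏_1 + a_0` of exact total degree 2 (`a_2 ≠ 0`), and let the monic
OPS `{ℙ_n}` of `u` and `{ℚ_n}` of `v` be related by `ℙ_n = ℚ_n + M_n ℚ_{n-1} + N_n ℚ_{n-2}`.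
Then `N_n Ĥ_{n-2} = H_n A_{n-2,2}^t` for all `n ≥ 2`, `N_n` has full rank `r_{n-2}^d`,
and `N_2 = H_2 a_2^t Ĥ_0⁻¹`.  (`Nmat n` stands for `N_{n+2}` and `M n` for `M_{n+1}`.) -/
theorem christoffel_Nn_formula
    {d : ℕ} (hd : 1 ≤ d)
    (u v : MvPolynomial (Fin d) ℝ →ₗ[ℝ] ℝ)
    (a2 : Idx d 2 → ℝ) (a1 : Idx d 1 → ℝ) (a0 : ℝ) (ha2 : a2 ≠ 0)
    (hv : ∀ p : MvPolynomial (Fin d) ℝ, v p = u (lamPoly a2 a1 a0 * p))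
    (P : PolySystem d) (hP : IsOPS u P) (hPmonic : P.IsMonic)
    (Q : PolySystem d) (hQ : IsOPS v Q) (hQmonic : Q.IsMonic)
    (M : (n : ℕ) → Matrix (Idx d (n + 1)) (Idx d n) ℝ)
    (Nmat : (n : ℕ) → Matrix (Idx d (n + 2)) (Idx d n) ℝ)
    (hconn1 : ∀ α : Idx d 1, P.vec 1 α = Q.vec 1 α + matVec (M 0) (Q.vec 0) α)
    (hconn : ∀ (n : ℕ) (α : Idx d (n + 2)),
      P.vec (n + 2) α = Q.vec (n + 2) α + matVec (M (n + 1)) (Q.vec (n + 1)) α +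
        matVec (Nmat n) (Q.vec n) α) :
    (∀ n : ℕ, Nmat n * Hmat v Q n = Hmat u P (n + 2) * (Amat2 a2 n)ᵀ) ∧
    (∀ n : ℕ, (Nmat n).rank = Fintype.card (Idx d n)) ∧
    Nmat 0 = Hmat u P 2 * (Matrix.of fun (α : Idx d 2) (_ : Idx d 0) => a2 α) *
      (Hmat v Q 0)⁻¹ :=
  christoffel_Nn_formula_general u v a2 a1 a0 ha2 hv P hP hPmonic Q hQ hQmonic M Nmat hconn
end

section
/- Let u be a quasi-definite moment functional on Π^d, λ(x) a polynomial of total degree s, and suppose v = λ(x)u is also quasi-definite, with OPS {ℙ_n} for u and {ℚ_n} for v. Then the components of λ(x)ℚ_n are quasi-orthogonal with respect to u of order s: there exist matrices A_k^n of appropriate sizes such that λ(x) ℚ_n = Σ_{k=n}^{n+s} A_k^n ℙ_k; equivalently, ⟨u, λ(x) ℚ_n ℙ_k^t⟩ = 0 for all 0 ≤ k ≤ n−1. -/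
open MvPolynomial Matrix

/-- If `⟨u, 𝕏_m ℙ_n^t⟩ = 0` for all `m < n`, then `u (p ℙ_n) = 0` for any
polynomial `p` of total degree `< n`. -/
lemma ops_mul_zero {d : ℕ} (u : MvPolynomial (Fin d) ℝ →ₗ[ℝ] ℝ) (P : PolySystem d)
    (h : ∀ m n : ℕ, m < n → ∀ (α : Idx d m) (β : Idx d n), u (monIdx α * P.vec n β) = 0)
    (n : ℕ) (β : Idx d n) (p : MvPolynomial (Fin d) ℝ) (hp : p.totalDegree < n) :
    u (p * P.vec n β) = 0 := by
  conv_lhs => rw [p.as_sum]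
  rw [Finset.sum_mul, map_sum]
  apply Finset.sum_eq_zero
  intro ν hν
  have hdeg : (ν.sum fun _ e => e) < n := lt_of_le_of_lt (le_totalDegree hν) hp
  have hmem : ⇑ν ∈ Finset.Nat.antidiagonalTuple d (ν.sum fun _ e => e) := by
    rw [Finset.Nat.mem_antidiagonalTuple]
    exact (Finsupp.sum_fintype ν (fun _ e => e) fun _ => rfl).symm
  have hmon : (monomial ν (coeff ν p) : MvPolynomial (Fin d) ℝ)
      = coeff ν p • monIdx (⟨⇑ν, hmem⟩ : Idx d (ν.sum fun _ e => e)) := by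
    simp [monIdx, Finsupp.equivFunOnFinite_symm_coe, smul_monomial]
  rw [hmon, smul_mul_assoc, _root_.map_smul, h _ n hdeg ⟨⇑ν, hmem⟩ β, smul_zero]

/-- Remark after Theorem 4.1.  If `u` and `v = λ(x)u` are
quasi-definite, with OPS `{ℙ_n}` and `{ℚ_n}` respectively and `deg λ = s`, then the
entries of `λ(x)ℚ_n` are quasi-orthogonal of order `s` with respect to `u`:
`λ(x)ℚ_n = Σ_{k=n}^{n+s} A_k^n ℙ_k` for suitable matrices `A_k^n`; equivalently
`⟨u, λ(x)ℚ_nℙ_k^t⟩ = 0` for `0 ≤ k ≤ n-1`. -/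
theorem christoffel_quasi_orthogonality
    {d : ℕ} (hd : 1 ≤ d)
    (u v : MvPolynomial (Fin d) ℝ →ₗ[ℝ] ℝ)
    (lam : MvPolynomial (Fin d) ℝ) (s : ℕ) (hs : lam.totalDegree = s)
    (hv : ∀ p : MvPolynomial (Fin d) ℝ, v p = u (lam * p))
    (P : PolySystem d) (hP : IsOPS u P)
    (Q : PolySystem d) (hQ : IsOPS v Q) :
    ∀ n : ℕ,
      (∃ A : (k : ℕ) → Matrix (Idx d n) (Idx d k) ℝ,
        ∀ α : Idx d n,
          lam * Q.vec n α = ∑ k ∈ Finset.Icc n (n + s), matVec (A k) (P.vec k) α) ∧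
      (∀ k : ℕ, k < n → ∀ (α : Idx d n) (β : Idx d k),
        u (lam * Q.vec n α * P.vec k β) = 0) := by
  intro n
  have hb : ∀ k : ℕ, k < n → ∀ (α : Idx d n) (β : Idx d k),
      u (lam * Q.vec n α * P.vec k β) = 0 := by
    intro k hk α β
    have h1 : lam * Q.vec n α * P.vec k β = lam * (P.vec k β * Q.vec n α) := by ring
    rw [h1, ← hv]
    exact ops_mul_zero v Q hQ.1 n α _ (by rw [P.degree_eq]; exact hk)
  refine ⟨?_, hb⟩
  -- representation of `lam * Q.vec n α` in the basis `{ℙ_m}`, `m ≤ n + s`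
  have hrep : ∀ α : Idx d n, ∃ c : (Σ m : Fin (n + s + 1), Idx d m.1) → ℝ,
      ∑ t, c t • P.vec t.1.1 t.2 = lam * Q.vec n α := by
    intro α
    have hdeg : (lam * Q.vec n α).totalDegree ≤ n + s := by
      calc (lam * Q.vec n α).totalDegree
          ≤ lam.totalDegree + (Q.vec n α).totalDegree := totalDegree_mul _ _
        _ = n + s := by rw [hs, Q.degree_eq]; omega
    have hsp := P.spans (n + s) _ hdeg
    have hset : {q | ∃ m ≤ n + s, ∃ γ : Idx d m, q = P.vec m γ}
        = Set.range (fun t : (Σ m : Fin (n + s + 1), Idx d m.1) => P.vec t.1.1 t.2) := by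
      ext q
      constructor
      · rintro ⟨m, hm, γ, rfl⟩
        exact ⟨⟨⟨m, by omega⟩, γ⟩, rfl⟩
      · rintro ⟨⟨m, γ⟩, rfl⟩
        exact ⟨m.1, by omega, γ, rfl⟩
    rw [hset] at hsp
    exact (Submodule.mem_span_range_iff_exists_fun ℝ).mp hsp
  choose c hc using hrep
  -- the coefficients of index `< n` vanish
  have hzero : ∀ k, ∀ (hk : k < n), ∀ (α : Idx d n) (γ : Idx d k),
      c α ⟨⟨k, by omega⟩, γ⟩ = 0 := by
    intro k
    induction k using Nat.strong_induction_on with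
    | _ k IH =>
      intro hk α
      have hMc : (Matrix.of fun ν γ : Idx d k => u (monIdx ν * P.vec k γ)).mulVec
          (fun γ => c α ⟨⟨k, by omega⟩, γ⟩) = 0 := by
        funext ν
        have h0 : u (monIdx ν * (lam * Q.vec n α)) = 0 := by
          have he : monIdx ν * (lam * Q.vec n α) = lam * (monIdx ν * Q.vec n α) := by ring
          rw [he, ← hv]
          exact hQ.1 k n hk ν α
        rw [← hc α, Finset.mul_sum] at h0
        simp only [mul_smul_comm, map_sum, _root_.map_smul] at h0
        rw [← Finset.univ_sigma_univ, Finset.sum_sigma] at h0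
        have hsum : ∀ m : Fin (n + s + 1), m ≠ ⟨k, by omega⟩ →
            ∑ γ : Idx d m.1, c α ⟨m, γ⟩ • u (monIdx ν * P.vec m.1 γ) = 0 := by
          intro m hm
          rcases lt_trichotomy m.1 k with hlt | heq | hgt
          · refine Finset.sum_eq_zero fun γ _ => ?_
            rw [show c α ⟨m, γ⟩ = c α ⟨⟨m.1, by omega⟩, γ⟩ from rfl,
              IH m.1 hlt (by omega) α γ, zero_smul]
          · exact absurd (Fin.ext heq) hm
          · refine Finset.sum_eq_zero fun γ _ => ?_
            rw [hP.1 k m.1 hgt ν γ, smul_zero]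
        rw [Finset.sum_eq_single_of_mem (⟨k, by omega⟩ : Fin (n + s + 1))
          (Finset.mem_univ _) (fun m _ hm => hsum m hm)] at h0
        show ∑ γ : Idx d k, u (monIdx ν * P.vec k γ) * c α ⟨⟨k, by omega⟩, γ⟩ = 0
        rw [← h0]
        refine Finset.sum_congr rfl fun γ _ => ?_
        rw [smul_eq_mul, mul_comm]
      have hdet := hP.2 k
      have h2 := congrArg
        ((Matrix.of fun ν γ : Idx d k => u (monIdx ν * P.vec k γ))⁻¹.mulVec) hMc
      rw [Matrix.mulVec_mulVec, Matrix.nonsing_inv_mul _ hdet, Matrix.one_mulVec,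
        Matrix.mulVec_zero] at h2
      intro γ
      exact congrFun h2 γ
  refine ⟨fun k => Matrix.of fun α γ =>
    if hk : k < n + s + 1 then c α ⟨⟨k, hk⟩, γ⟩ else 0, ?_⟩
  intro α
  rw [← hc α]
  set g : ℕ → MvPolynomial (Fin d) ℝ := fun k =>
    if hk : k < n + s + 1 then ∑ γ : Idx d k, c α ⟨⟨k, hk⟩, γ⟩ • P.vec k γ else 0 with hg
  have h1 : ∑ t : (Σ m : Fin (n + s + 1), Idx d m.1), c α t • P.vec t.1.1 t.2
      = ∑ m : Fin (n + s + 1), g m.1 := by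
    rw [← Finset.univ_sigma_univ, Finset.sum_sigma]
    apply Finset.sum_congr rfl
    intro m _
    rw [hg]
    simp only [dif_pos m.2]
  have h2 : ∑ m : Fin (n + s + 1), g m.1 = ∑ k ∈ Finset.range (n + s + 1), g k :=
    Fin.sum_univ_eq_sum_range g (n + s + 1)
  rw [h1, h2, Finset.range_eq_Ico,
    ← Finset.sum_Ico_consecutive g (Nat.zero_le n) (by omega : n ≤ n + s + 1)]
  have hfirst : ∑ k ∈ Finset.Ico 0 n, g k = 0 := by
    apply Finset.sum_eq_zero
    intro k hk
    have hkn : k < n := (Finset.mem_Ico.mp hk).2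
    rw [hg]
    simp only [dif_pos (by omega : k < n + s + 1)]
    apply Finset.sum_eq_zero
    intro γ _
    rw [hzero k hkn α γ, zero_smul]
  rw [hfirst, zero_add, Finset.Ico_add_one_right_eq_Icc]
  apply Finset.sum_congr rfl
  intro k hk
  have hk' : k < n + s + 1 := by
    have := (Finset.mem_Icc.mp hk).2; omega
  rw [hg]
  simp only [matVec, Matrix.of_apply, dif_pos hk']
end

section
/- Let u and v = λ(x)u both be quasi-definite moment functionals on Π^d, where λ(x) = a_2·𝕏_2 + a_1·𝕏_1 + a_0 has exact total degree 2, let {ℙ_n} and {ℚ_n} be their monic OPS with three term relation coefficients C_{n,i} (for u) and Ĉ_{n,i} (for v), and let ℙ_n = ℚ_n + M_n ℚ_{n−1} + N_n ℚ_{n−2} be the connection between the two families. Then the compatibility relation C_{n,i} N_{n−1} = N_n Ĉ_{n−2,i} holds automatically for all n ≥ 3 and 1 ≤ i ≤ d; in the proof one uses that L_{n−3,i} A_{n−2,2} − A_{n−3,2} L_{n−1,i} = 0, which follows from the commutation property L_{n,i} L_{n+1,j} = L_{n,j} L_{n+1,i}. -/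
open MvPolynomial Matrix

/-!
Pair `x_i ℙ_n` with `𝕏_{n-3}ᵗ` under `v`. Expanding by the three term relation of `{ℙ_n}` and
then by the connection formula, every term but `C_{n,i} N_{n-1} ⟨v, ℚ_{n-3} 𝕏_{n-3}ᵗ⟩` vanishes by
the orthogonality of `{ℚ_n}`; expanding by the connection formula first and then by the three term
relation of `{ℚ_n}`, only `N_n Ĉ_{n-2,i} ⟨v, ℚ_{n-3} 𝕏_{n-3}ᵗ⟩` survives. Since
`⟨v, ℚ_{n-3} 𝕏_{n-3}ᵗ⟩` is nonsingular, the two coefficient matrices agree. The identity for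
`A_{h,2}` follows by applying `L_{h,i} L_{h+1,j} = L_{h,j} L_{h+1,i}` twice to each of its terms.
-/

section Lmat

variable {d : ℕ}

lemma Lmat_mul_Lmat_apply (m : ℕ) (i j : Fin d) (α : Idx d m) (γ : Idx d (m + 2)) :
    (Lmat d m i * Lmat d (m + 1) j) α γ =
      if γ.1 = (fun k => α.1 k + ((if k = i then 1 else 0) + (if k = j then 1 else 0)))
        then 1 else 0 := by
  have hα : ∑ k, α.1 k = m := Finset.Nat.mem_antidiagonalTuple.mp α.2
  let β₀ : Idx d (m + 1) := ⟨fun k => α.1 k + if k = i then 1 else 0, by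
    simp [Finset.Nat.mem_antidiagonalTuple, Finset.sum_add_distrib, hα]⟩
  have hβ₀ : ∀ β : Idx d (m + 1),
      (β.1 = fun k => α.1 k + if k = i then 1 else 0) ↔ β = β₀ := fun β => by
    simp [β₀, Subtype.ext_iff]
  simp only [Matrix.mul_apply, Lmat, Matrix.of_apply, hβ₀, ite_mul, one_mul, zero_mul,
    Finset.sum_ite_eq', Finset.mem_univ, if_true, β₀, add_assoc]

lemma Lmat_mul_Lmat_comm (m : ℕ) (i j : Fin d) :
    Lmat d m i * Lmat d (m + 1) j = Lmat d m j * Lmat d (m + 1) i := by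
  ext α γ
  simp only [Lmat_mul_Lmat_apply, add_comm (if _ = i then 1 else 0)]

lemma Lmat_mul_Amat2 (a2 : Idx d 2 → ℝ) (m : ℕ) (i : Fin d) :
    Lmat d m i * Amat2 a2 (m + 1) = Amat2 a2 m * Lmat d (m + 2) i := by
  simp only [Amat2, Matrix.mul_sum, Matrix.sum_mul]
  refine Finset.sum_congr rfl fun p _ => Finset.sum_congr rfl fun q _ => ?_
  split_ifs
  · rw [Matrix.mul_smul, Matrix.smul_mul, ← Matrix.mul_assoc, Lmat_mul_Lmat_comm,
      Matrix.mul_assoc, Lmat_mul_Lmat_comm, ← Matrix.mul_assoc]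
  · rw [Matrix.mul_zero, Matrix.zero_mul]

end Lmat

section Moments

variable {d : ℕ} {a b : Type}

/-- `momentMat v n w = ⟨v, w 𝕏_nᵗ⟩`. -/
noncomputable def momentMat (v : MvPolynomial (Fin d) ℝ →ₗ[ℝ] ℝ) (n : ℕ)
    (w : b → MvPolynomial (Fin d) ℝ) : Matrix b (Idx d n) ℝ :=
  Matrix.of fun β γ => v (monIdx γ * w β)

variable (v : MvPolynomial (Fin d) ℝ →ₗ[ℝ] ℝ) (n : ℕ)

lemma momentMat_add (w₁ w₂ : b → MvPolynomial (Fin d) ℝ) :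
    momentMat v n (w₁ + w₂) = momentMat v n w₁ + momentMat v n w₂ := by
  ext β γ
  simp [momentMat, mul_add]

lemma momentMat_matVec [Fintype b] (A : Matrix a b ℝ) (w : b → MvPolynomial (Fin d) ℝ) :
    momentMat v n (matVec A w) = A * momentMat v n w := by
  ext α γ
  simp [momentMat, matVec, Matrix.mul_apply, Finset.mul_sum]

lemma smul_matVec [Fintype b] (p : MvPolynomial (Fin d) ℝ) (A : Matrix a b ℝ)
    (w : b → MvPolynomial (Fin d) ℝ) : p • matVec A w = matVec A (p • w) := by
  ext1 α
  simp [matVec, Finset.mul_sum]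

end Moments

namespace IsOPS

variable {d : ℕ} {v : MvPolynomial (Fin d) ℝ →ₗ[ℝ] ℝ} {Q : PolySystem d} {a : Type}

lemma momentMat_eq_zero (hQ : IsOPS v Q) {n m : ℕ} (h : n < m) :
    momentMat v n (Q.vec m) = 0 := by
  ext β γ
  exact hQ.1 n m h γ β

lemma momentMat_matVec_eq_zero (hQ : IsOPS v Q) {n m : ℕ} (A : Matrix a (Idx d m) ℝ)
    (h : n < m) : momentMat v n (matVec A (Q.vec m)) = 0 := by
  rw [momentMat_matVec, hQ.momentMat_eq_zero h, Matrix.mul_zero]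

lemma momentMat_add_matVec_add_matVec_eq_zero (hQ : IsOPS v Q) {n k : ℕ}
    {w : a → MvPolynomial (Fin d) ℝ} (hw : momentMat v n w = 0)
    (A₁ : Matrix a (Idx d (k + 1)) ℝ) (A₀ : Matrix a (Idx d k) ℝ) (h : n < k) :
    momentMat v n (w + matVec A₁ (Q.vec (k + 1)) + matVec A₀ (Q.vec k)) = 0 := by
  rw [momentMat_add, momentMat_add, hw, hQ.momentMat_matVec_eq_zero _ (by omega),
    hQ.momentMat_matVec_eq_zero _ h, add_zero, add_zero]

lemma momentMat_add_matVec_add_matVec_self (hQ : IsOPS v Q) {n : ℕ}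
    {w : a → MvPolynomial (Fin d) ℝ} (hw : momentMat v n w = 0)
    (A₁ : Matrix a (Idx d (n + 1)) ℝ) (A₀ : Matrix a (Idx d n) ℝ) :
    momentMat v n (w + matVec A₁ (Q.vec (n + 1)) + matVec A₀ (Q.vec n)) =
      A₀ * momentMat v n (Q.vec n) := by
  rw [momentMat_add, momentMat_add, hw, hQ.momentMat_matVec_eq_zero _ (by omega),
    momentMat_matVec, zero_add, zero_add]

lemma mul_momentMat_injective (hQ : IsOPS v Q) (n : ℕ) :
    Function.Injective fun A : Matrix a (Idx d n) ℝ => A * momentMat v n (Q.vec n) := by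
  have hdet : IsUnit (momentMat v n (Q.vec n)).det := by
    rw [← Matrix.det_transpose]
    exact hQ.2 n
  let := Matrix.invertibleOfIsUnitDet _ hdet
  exact Matrix.mul_left_injective_of_invertible _

variable {P : PolySystem d} {M : (k : ℕ) → Matrix (Idx d (k + 1)) (Idx d k) ℝ}
  {Nm : (k : ℕ) → Matrix (Idx d (k + 2)) (Idx d k) ℝ}

lemma momentMat_of_connection (hQ : IsOPS v Q)
    (hconn : ∀ k, P.vec (k + 2) =
      Q.vec (k + 2) + matVec (M (k + 1)) (Q.vec (k + 1)) + matVec (Nm k) (Q.vec k))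
    (n : ℕ) : momentMat v n (P.vec (n + 2)) = Nm n * momentMat v n (Q.vec n) := by
  rw [hconn]
  exact hQ.momentMat_add_matVec_add_matVec_self (hQ.momentMat_eq_zero (by omega)) _ _

lemma momentMat_of_connection_eq_zero (hQ : IsOPS v Q)
    (hconn : ∀ k, P.vec (k + 2) =
      Q.vec (k + 2) + matVec (M (k + 1)) (Q.vec (k + 1)) + matVec (Nm k) (Q.vec k))
    {n m : ℕ} (h : n + 2 < m) : momentMat v n (P.vec m) = 0 := by
  obtain ⟨k, rfl⟩ : ∃ k, m = k + 2 := ⟨m - 2, by omega⟩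
  rw [hconn]
  exact hQ.momentMat_add_matVec_add_matVec_eq_zero (hQ.momentMat_eq_zero (by omega)) _ _
    (by omega)

variable {L : (k : ℕ) → Matrix (Idx d (k + 1)) (Idx d (k + 2)) ℝ}
  {B : (k : ℕ) → Matrix (Idx d (k + 1)) (Idx d (k + 1)) ℝ}
  {C : (k : ℕ) → Matrix (Idx d (k + 1)) (Idx d k) ℝ} {p : MvPolynomial (Fin d) ℝ}

lemma momentMat_smul_of_threeTerm (hQ : IsOPS v Q)
    (h3 : ∀ k, p • Q.vec (k + 1) =
      matVec (L k) (Q.vec (k + 2)) + matVec (B k) (Q.vec (k + 1)) + matVec (C k) (Q.vec k))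
    (n : ℕ) : momentMat v n (p • Q.vec (n + 1)) = C n * momentMat v n (Q.vec n) := by
  rw [h3]
  exact hQ.momentMat_add_matVec_add_matVec_self (hQ.momentMat_matVec_eq_zero _ (by omega)) _ _

lemma momentMat_smul_of_threeTerm_eq_zero (hQ : IsOPS v Q)
    (h3 : ∀ k, p • Q.vec (k + 1) =
      matVec (L k) (Q.vec (k + 2)) + matVec (B k) (Q.vec (k + 1)) + matVec (C k) (Q.vec k))
    {n m : ℕ} (h : n + 1 < m) : momentMat v n (p • Q.vec m) = 0 := by
  obtain ⟨k, rfl⟩ : ∃ k, m = k + 1 := ⟨m - 1, by omega⟩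
  rw [h3]
  exact hQ.momentMat_add_matVec_add_matVec_eq_zero
    (hQ.momentMat_matVec_eq_zero _ (by omega)) _ _ (by omega)

lemma momentMat_smul_eq_of_threeTerm_of_connection (hQ : IsOPS v Q)
    (hconn : ∀ k, P.vec (k + 2) =
      Q.vec (k + 2) + matVec (M (k + 1)) (Q.vec (k + 1)) + matVec (Nm k) (Q.vec k))
    {n : ℕ} {L' : Matrix (Idx d (n + 3)) (Idx d (n + 4)) ℝ}
    {B' : Matrix (Idx d (n + 3)) (Idx d (n + 3)) ℝ}
    {C' : Matrix (Idx d (n + 3)) (Idx d (n + 2)) ℝ}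
    (h3 : p • P.vec (n + 3) =
      matVec L' (P.vec (n + 4)) + matVec B' (P.vec (n + 3)) + matVec C' (P.vec (n + 2))) :
    momentMat v n (p • P.vec (n + 3)) = C' * Nm n * momentMat v n (Q.vec n) := by
  rw [h3, momentMat_add, momentMat_add, momentMat_matVec, momentMat_matVec, momentMat_matVec,
    hQ.momentMat_of_connection_eq_zero hconn (by omega),
    hQ.momentMat_of_connection_eq_zero hconn (by omega), hQ.momentMat_of_connection hconn,
    Matrix.mul_zero, Matrix.mul_zero, zero_add, zero_add, Matrix.mul_assoc]

lemma momentMat_smul_eq_of_connection_of_threeTerm (hQ : IsOPS v Q)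
    (hconn : ∀ k, P.vec (k + 2) =
      Q.vec (k + 2) + matVec (M (k + 1)) (Q.vec (k + 1)) + matVec (Nm k) (Q.vec k))
    (h3 : ∀ k, p • Q.vec (k + 1) =
      matVec (L k) (Q.vec (k + 2)) + matVec (B k) (Q.vec (k + 1)) + matVec (C k) (Q.vec k))
    (n : ℕ) :
    momentMat v n (p • P.vec (n + 3)) = Nm (n + 1) * C n * momentMat v n (Q.vec n) := by
  rw [hconn (n + 1), smul_add, smul_add, smul_matVec, smul_matVec, momentMat_add, momentMat_add,
    momentMat_matVec, momentMat_matVec, hQ.momentMat_smul_of_threeTerm_eq_zero h3 (by omega),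
    hQ.momentMat_smul_of_threeTerm_eq_zero h3 (by omega), hQ.momentMat_smul_of_threeTerm h3,
    Matrix.mul_zero, zero_add, zero_add, Matrix.mul_assoc]

end IsOPS

/-- Indexing: `B n i = B_{n,i}`, `C n i = C_{n+1,i}`, `M n = M_{n+1}`, `Nm n = N_{n+2}`, likewise
for the hatted matrices. -/
theorem christoffel_compatibility_automatic_general
    {d : ℕ}
    (v : MvPolynomial (Fin d) ℝ →ₗ[ℝ] ℝ)
    (a2 : Idx d 2 → ℝ)
    (P : PolySystem d)
    (Q : PolySystem d) (hQ : IsOPS v Q)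
    (B : (n : ℕ) → Fin d → Matrix (Idx d n) (Idx d n) ℝ)
    (C : (n : ℕ) → Fin d → Matrix (Idx d (n + 1)) (Idx d n) ℝ)
    (h3term : ∀ (n : ℕ) (i : Fin d) (α : Idx d (n + 1)),
      X i * P.vec (n + 1) α = matVec (Lmat d (n + 1) i) (P.vec (n + 2)) α +
        matVec (B (n + 1) i) (P.vec (n + 1)) α + matVec (C n i) (P.vec n) α)
    (Bh : (n : ℕ) → Fin d → Matrix (Idx d n) (Idx d n) ℝ)
    (Ch : (n : ℕ) → Fin d → Matrix (Idx d (n + 1)) (Idx d n) ℝ)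
    (h3termQ : ∀ (n : ℕ) (i : Fin d) (α : Idx d (n + 1)),
      X i * Q.vec (n + 1) α = matVec (Lmat d (n + 1) i) (Q.vec (n + 2)) α +
        matVec (Bh (n + 1) i) (Q.vec (n + 1)) α + matVec (Ch n i) (Q.vec n) α)
    (M : (n : ℕ) → Matrix (Idx d (n + 1)) (Idx d n) ℝ)
    (Nm : (n : ℕ) → Matrix (Idx d (n + 2)) (Idx d n) ℝ)
    (hconn : ∀ (n : ℕ) (α : Idx d (n + 2)),
      P.vec (n + 2) α = Q.vec (n + 2) α + matVec (M (n + 1)) (Q.vec (n + 1)) α +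
        matVec (Nm n) (Q.vec n) α) :
    (∀ (n : ℕ) (i : Fin d), C (n + 2) i * Nm n = Nm (n + 1) * Ch n i) ∧
    (∀ (m : ℕ) (i : Fin d),
      Lmat d m i * Amat2 a2 (m + 1) - Amat2 a2 m * Lmat d (m + 2) i = 0) := by
  refine ⟨fun n i => hQ.mul_momentMat_injective n ?_,
    fun m i => sub_eq_zero.mpr (Lmat_mul_Amat2 a2 m i)⟩
  have hconn' : ∀ k, P.vec (k + 2) =
      Q.vec (k + 2) + matVec (M (k + 1)) (Q.vec (k + 1)) + matVec (Nm k) (Q.vec k) :=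
    fun k => funext (hconn k)
  have h3P : (X i : MvPolynomial (Fin d) ℝ) • P.vec (n + 3) =
      matVec (Lmat d (n + 3) i) (P.vec (n + 4)) + matVec (B (n + 3) i) (P.vec (n + 3)) +
        matVec (C (n + 2) i) (P.vec (n + 2)) :=
    funext (h3term (n + 2) i)
  have h3Q : ∀ k, (X i : MvPolynomial (Fin d) ℝ) • Q.vec (k + 1) =
      matVec (Lmat d (k + 1) i) (Q.vec (k + 2)) + matVec (Bh (k + 1) i) (Q.vec (k + 1)) +
        matVec (Ch k i) (Q.vec k) :=
    fun k => funext (h3termQ k i)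
  exact (hQ.momentMat_smul_eq_of_threeTerm_of_connection hconn' h3P).symm.trans
    (hQ.momentMat_smul_eq_of_connection_of_threeTerm hconn' h3Q n)

/-- Remark after Theorem 4.2.  If `u` and `v = λ(x)u` are both
quasi-definite, with monic OPS `{ℙ_n}`, `{ℚ_n}`, three term coefficients `C_{n,i}` and
`Ĉ_{n,i}`, and connection `ℙ_n = ℚ_n + M_nℚ_{n-1} + N_nℚ_{n-2}`, then the compatibility
relation `C_{n,i}N_{n-1} = N_nĈ_{n-2,i}` holds automatically for all `n ≥ 3`; moreover
`L_{n-3,i}A_{n-2,2} - A_{n-3,2}L_{n-1,i} = 0`, a consequence of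
`L_{n,i}L_{n+1,j} = L_{n,j}L_{n+1,i}`.
(Indexing: `B n i = B_{n,i}`, `C n i = C_{n+1,i}`, `M n = M_{n+1}`, `Nm n = N_{n+2}`,
likewise for the hatted matrices.) -/
theorem christoffel_compatibility_automatic
    {d : ℕ} (hd : 1 ≤ d)
    (u v : MvPolynomial (Fin d) ℝ →ₗ[ℝ] ℝ)
    (a2 : Idx d 2 → ℝ) (a1 : Idx d 1 → ℝ) (a0 : ℝ) (ha2 : a2 ≠ 0)
    (hv : ∀ p : MvPolynomial (Fin d) ℝ, v p = u (lamPoly a2 a1 a0 * p))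
    (P : PolySystem d) (hP : IsOPS u P) (hPmonic : P.IsMonic)
    (Q : PolySystem d) (hQ : IsOPS v Q) (hQmonic : Q.IsMonic)
    (B : (n : ℕ) → Fin d → Matrix (Idx d n) (Idx d n) ℝ)
    (C : (n : ℕ) → Fin d → Matrix (Idx d (n + 1)) (Idx d n) ℝ)
    (h3term0 : ∀ (i : Fin d) (α : Idx d 0),
      X i * P.vec 0 α = matVec (Lmat d 0 i) (P.vec 1) α + matVec (B 0 i) (P.vec 0) α)
    (h3term : ∀ (n : ℕ) (i : Fin d) (α : Idx d (n + 1)),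
      X i * P.vec (n + 1) α = matVec (Lmat d (n + 1) i) (P.vec (n + 2)) α +
        matVec (B (n + 1) i) (P.vec (n + 1)) α + matVec (C n i) (P.vec n) α)
    (Bh : (n : ℕ) → Fin d → Matrix (Idx d n) (Idx d n) ℝ)
    (Ch : (n : ℕ) → Fin d → Matrix (Idx d (n + 1)) (Idx d n) ℝ)
    (h3termQ0 : ∀ (i : Fin d) (α : Idx d 0),
      X i * Q.vec 0 α = matVec (Lmat d 0 i) (Q.vec 1) α + matVec (Bh 0 i) (Q.vec 0) α)
    (h3termQ : ∀ (n : ℕ) (i : Fin d) (α : Idx d (n + 1)),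
      X i * Q.vec (n + 1) α = matVec (Lmat d (n + 1) i) (Q.vec (n + 2)) α +
        matVec (Bh (n + 1) i) (Q.vec (n + 1)) α + matVec (Ch n i) (Q.vec n) α)
    (M : (n : ℕ) → Matrix (Idx d (n + 1)) (Idx d n) ℝ)
    (Nm : (n : ℕ) → Matrix (Idx d (n + 2)) (Idx d n) ℝ)
    (hconn1 : ∀ α : Idx d 1, P.vec 1 α = Q.vec 1 α + matVec (M 0) (Q.vec 0) α)
    (hconn : ∀ (n : ℕ) (α : Idx d (n + 2)),
      P.vec (n + 2) α = Q.vec (n + 2) α + matVec (M (n + 1)) (Q.vec (n + 1)) α +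
        matVec (Nm n) (Q.vec n) α) :
    (∀ (n : ℕ) (i : Fin d), C (n + 2) i * Nm n = Nm (n + 1) * Ch n i) ∧
    (∀ (m : ℕ) (i : Fin d),
      Lmat d m i * Amat2 a2 (m + 1) - Amat2 a2 m * Lmat d (m + 2) i = 0) :=
  christoffel_compatibility_automatic_general v a2 P Q hQ B C h3term Bh Ch h3termQ M Nm hconn
end

section
/- Let u be a quasi-definite, centrally symmetric moment functional on Π^d (i.e., ⟨u, x^ν⟩ = 0 whenever |ν| is odd), and let v = λ(x)u with λ(x) = a_2·𝕏_2 + a_1·𝕏_1 + a_0 of exact total degree 2 (a_2 ≠ 0). Then v is centrally symmetric if and only if a_1 = 0, that is, if and only if λ(x) = Σ_{1≤i≤j≤d} a^{(2)}_{ij} x_i x_j + a^{(0)}. -/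
open MvPolynomial Matrix

/-- A moment functional is centrally symmetric if all its moments of odd order vanish. -/
def CentrallySymmetric {d : ℕ} (u : MvPolynomial (Fin d) ℝ →ₗ[ℝ] ℝ) : Prop :=
  ∀ ν : Fin d →₀ ℕ, Odd (ν.sum fun _ e => e) → u (MvPolynomial.monomial ν 1) = 0

section AuxCS

lemma sum_iota {d : ℕ} (f : Fin d → ℕ) :
    ((Finsupp.equivFunOnFinite.symm f).sum fun _ e => e) = ∑ i, f i := by
  rw [Finsupp.sum_fintype _ _ (fun _ => rfl)]
  simp

lemma sum_mem_idx {d n : ℕ} (α : Idx d n) : ∑ i, α.1 i = n := by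
  have := α.2; rwa [Finset.Nat.mem_antidiagonalTuple] at this

lemma iota_sum_idx {d n : ℕ} (α : Idx d n) :
    ((Finsupp.equivFunOnFinite.symm α.1).sum fun _ e => e) = n := by
  rw [sum_iota, sum_mem_idx]

lemma cs_smul {d : ℕ} {u : MvPolynomial (Fin d) ℝ →ₗ[ℝ] ℝ} (hcs : CentrallySymmetric u)
    (ν : Fin d →₀ ℕ) (h : Odd (ν.sum fun _ e => e)) (c : ℝ) :
    u (MvPolynomial.monomial ν c) = 0 := by
  have : (MvPolynomial.monomial ν c : MvPolynomial (Fin d) ℝ)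
      = c • MvPolynomial.monomial ν 1 := by
    rw [MvPolynomial.smul_monomial, smul_eq_mul, mul_one]
  rw [this, _root_.map_smul, hcs ν h, smul_zero]

lemma monIdx_mul_monIdx {d m n : ℕ} (α : Idx d m) (β : Idx d n) :
    monIdx α * monIdx β = MvPolynomial.monomial
      (Finsupp.equivFunOnFinite.symm α.1 + Finsupp.equivFunOnFinite.symm β.1) 1 := by
  rw [monIdx, monIdx, MvPolynomial.monomial_mul, one_mul]

lemma sum_add_deg {d : ℕ} (ν μ : Fin d →₀ ℕ) :
    ((ν + μ).sum fun _ e => e) = (ν.sum fun _ e => e) + (μ.sum fun _ e => e) :=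
  Finsupp.sum_add_index' (fun _ => rfl) (fun _ _ _ => rfl)

/-- Decomposition of a polynomial of total degree ≤ 1. -/
lemma decomp1 {d : ℕ} (p : MvPolynomial (Fin d) ℝ) (hp : p.totalDegree ≤ 1) :
    p = MvPolynomial.C (MvPolynomial.coeff 0 p)
      + ∑ β : Idx d 1,
          MvPolynomial.coeff (Finsupp.equivFunOnFinite.symm β.1) p • monIdx β := by
  ext ν
  rw [MvPolynomial.coeff_add, MvPolynomial.coeff_C, MvPolynomial.coeff_sum]
  have hterm : ∀ β : Idx d 1,
      MvPolynomial.coeff ν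
        (MvPolynomial.coeff (Finsupp.equivFunOnFinite.symm β.1) p • monIdx β)
      = if Finsupp.equivFunOnFinite.symm β.1 = ν then
          MvPolynomial.coeff (Finsupp.equivFunOnFinite.symm β.1) p else 0 := by
    intro β
    rw [MvPolynomial.coeff_smul, monIdx, MvPolynomial.coeff_monomial]
    by_cases h : Finsupp.equivFunOnFinite.symm β.1 = ν <;> simp [h]
  simp only [hterm]
  rcases Nat.lt_or_ge (ν.sum fun _ e => e) 2 with hlt | hge
  · interval_cases hs : (ν.sum fun _ e => e)
    · -- degree 0 : ν = 0
      have hν : ν = 0 := by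
        ext i
        by_contra hi
        have hmem : i ∈ ν.support := Finsupp.mem_support_iff.mpr hi
        have := Finset.single_le_sum (f := fun i => ν i) (fun _ _ => Nat.zero_le _) hmem
        have : 1 ≤ ν.sum fun _ e => e := le_trans (Nat.one_le_iff_ne_zero.mpr hi) this
        omega
      subst hν
      have : ∀ β : Idx d 1, Finsupp.equivFunOnFinite.symm β.1 ≠ (0 : Fin d →₀ ℕ) := by
        intro β h
        have := iota_sum_idx β
        rw [h] at this
        simp at this
      simp [this]
    · -- degree 1 : ν = ι β₀
      have hν1 : ∑ i, ν i = 1 := by rw [← hs, Finsupp.sum_fintype _ _ (fun _ => rfl)]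
      set β₀ : Idx d 1 := ⟨Finsupp.equivFunOnFinite ν, by
        rw [Finset.Nat.mem_antidiagonalTuple]; simpa using hν1⟩ with hβ₀
      have hι : Finsupp.equivFunOnFinite.symm β₀.1 = ν := by
        simp [hβ₀]
      have hν0 : ν ≠ 0 := by
        intro h; subst h; simp at hν1
      rw [if_neg (by exact fun h => hν0 h.symm), zero_add]
      rw [Finset.sum_eq_single β₀]
      · rw [hι, if_pos rfl]
      · intro β _ hβ
        rw [if_neg]
        intro h
        apply hβ
        have : β.1 = β₀.1 := by
          have := h.trans hι.symm
          have := congrArg (⇑Finsupp.equivFunOnFinite) this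
          simpa using this
        exact Subtype.ext this
      · intro h; exact absurd (Finset.mem_univ β₀) h
  · -- degree ≥ 2 : both sides vanish
    have hν0 : ν ≠ 0 := by
      intro h; subst h; simp at hge
    have hcoeff : MvPolynomial.coeff ν p = 0 := by
      apply MvPolynomial.coeff_eq_zero_of_totalDegree_lt
      have : (ν.sum fun _ e => e) = ∑ i ∈ ν.support, ν i := rfl
      omega
    rw [hcoeff, if_neg (by exact fun h => hν0 h.symm), zero_add]
    symm
    apply Finset.sum_eq_zero
    intro β _
    rw [if_neg]
    intro h
    have := iota_sum_idx β
    rw [h] at this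
    omega

/-- Expansion of `u (λ · x^ν)`. -/
lemma u_lam_mul {d : ℕ} (u : MvPolynomial (Fin d) ℝ →ₗ[ℝ] ℝ)
    (a2 : Idx d 2 → ℝ) (a1 : Idx d 1 → ℝ) (a0 : ℝ) (ν : Fin d →₀ ℕ) :
    u (lamPoly a2 a1 a0 * MvPolynomial.monomial ν 1)
    = (∑ α : Idx d 2,
        a2 α * u (MvPolynomial.monomial (Finsupp.equivFunOnFinite.symm α.1 + ν) 1))
    + (∑ α : Idx d 1,
        a1 α * u (MvPolynomial.monomial (Finsupp.equivFunOnFinite.symm α.1 + ν) 1))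
    + a0 * u (MvPolynomial.monomial ν 1) := by
  have hmon : ∀ (m : ℕ) (α : Idx d m),
      monIdx α * MvPolynomial.monomial ν 1
      = MvPolynomial.monomial (Finsupp.equivFunOnFinite.symm α.1 + ν) 1 := by
    intro m α
    rw [monIdx, MvPolynomial.monomial_mul, one_mul]
  have hC : (MvPolynomial.C a0 : MvPolynomial (Fin d) ℝ) * MvPolynomial.monomial ν 1
      = a0 • MvPolynomial.monomial ν 1 := by
    rw [MvPolynomial.C_mul_monomial, MvPolynomial.smul_monomial, smul_eq_mul, mul_one]
  rw [lamPoly, add_mul, add_mul, Finset.sum_mul, Finset.sum_mul, map_add, map_add,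
    map_sum, map_sum, hC, _root_.map_smul]
  simp only [smul_mul_assoc, _root_.map_smul, hmon, smul_eq_mul]

end AuxCS

/-- Proposition 4.5. Let `u` be quasi-definite and centrally
symmetric, and `v = λ(x)u` with `λ(x) = a_2·𝕏_2 + a_1·𝕏_1 + a_0` of exact total
degree 2.  Then `v` is centrally symmetric iff `a_1 = 0`. -/
theorem christoffel_centrally_symmetric_iff
    {d : ℕ} (hd : 1 ≤ d)
    (u v : MvPolynomial (Fin d) ℝ →ₗ[ℝ] ℝ)
    (hu : QuasiDefinite u) (hcs : CentrallySymmetric u)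
    (a2 : Idx d 2 → ℝ) (a1 : Idx d 1 → ℝ) (a0 : ℝ) (ha2 : a2 ≠ 0)
    (hv : ∀ p : MvPolynomial (Fin d) ℝ, v p = u (lamPoly a2 a1 a0 * p)) :
    CentrallySymmetric v ↔ a1 = 0 := by
  constructor
  · intro hcv
    -- the moment matrix on degree-1 indices
    set M : Matrix (Idx d 1) (Idx d 1) ℝ :=
      Matrix.of fun α β => u (monIdx α * monIdx β) with hM
    -- Step 1: vecMul a1 M = 0
    have hvec : Matrix.vecMul a1 M = 0 := by
      funext β
      have hodd : Odd ((Finsupp.equivFunOnFinite.symm β.1).sum fun _ e => e) := by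
        rw [iota_sum_idx]; exact odd_one
      have h0 : v (MvPolynomial.monomial (Finsupp.equivFunOnFinite.symm β.1) 1) = 0 :=
        hcv _ hodd
      rw [hv, u_lam_mul] at h0
      have h2 : ∀ α : Idx d 2,
          a2 α * u (MvPolynomial.monomial
            (Finsupp.equivFunOnFinite.symm α.1 + Finsupp.equivFunOnFinite.symm β.1) 1)
          = 0 := by
        intro α
        rw [hcs _ (by rw [sum_add_deg, iota_sum_idx, iota_sum_idx]; decide), mul_zero]
      rw [Finset.sum_congr rfl (fun α _ => h2 α), Finset.sum_const_zero, zero_add,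
        hcs _ hodd, mul_zero, add_zero] at h0
      have : Matrix.vecMul a1 M β
          = ∑ α : Idx d 1, a1 α * u (MvPolynomial.monomial
              (Finsupp.equivFunOnFinite.symm α.1 + Finsupp.equivFunOnFinite.symm β.1) 1) := by
        simp only [Matrix.vecMul, dotProduct, hM, Matrix.of_apply,
          monIdx_mul_monIdx]
      rw [this, h0]
      rfl
    -- Step 2: M is invertible, using quasi-definiteness
    obtain ⟨P, horth, hdet⟩ := hu
    have h1 := hdet 1
    set Cmat : Matrix (Idx d 1) (Idx d 1) ℝ :=
      Matrix.of fun β γ =>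
        MvPolynomial.coeff (Finsupp.equivFunOnFinite.symm γ.1) (P.vec 1 β) with hCmat
    have hNM : (Matrix.of fun α β : Idx d 1 => u (monIdx α * P.vec 1 β))
        = M * Cmat.transpose := by
      ext α β
      have hdeg : (P.vec 1 β).totalDegree ≤ 1 := le_of_eq (P.degree_eq 1 β)
      have hdec := decomp1 (P.vec 1 β) hdeg
      rw [Matrix.of_apply]
      conv_lhs => rw [hdec]
      rw [mul_add, Finset.mul_sum, map_add, map_sum]
      have hCz : u (monIdx α * MvPolynomial.C (MvPolynomial.coeff 0 (P.vec 1 β))) = 0 := by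
        have : monIdx α * MvPolynomial.C (MvPolynomial.coeff 0 (P.vec 1 β))
            = MvPolynomial.coeff 0 (P.vec 1 β) • monIdx α := by
          rw [mul_comm, MvPolynomial.C_mul']
        rw [this, _root_.map_smul, monIdx, cs_smul hcs _ (by rw [iota_sum_idx]; exact odd_one),
          smul_zero]
      rw [hCz, zero_add]
      simp only [mul_smul_comm, _root_.map_smul, smul_eq_mul]
      rw [Matrix.mul_apply]
      apply Finset.sum_congr rfl
      intro γ _
      rw [hM, hCmat]
      simp [mul_comm]
    have hMdet : IsUnit M.det := by
      rw [hNM, Matrix.det_mul] at h1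
      exact isUnit_of_mul_isUnit_left h1
    -- Step 3: conclude
    have hinv : M * M⁻¹ = 1 := Matrix.mul_nonsing_inv M hMdet
    calc a1 = Matrix.vecMul a1 1 := by rw [Matrix.vecMul_one]
      _ = Matrix.vecMul a1 (M * M⁻¹) := by rw [hinv]
      _ = Matrix.vecMul (Matrix.vecMul a1 M) M⁻¹ := by rw [Matrix.vecMul_vecMul]
      _ = Matrix.vecMul 0 M⁻¹ := by rw [hvec]
      _ = 0 := Matrix.zero_vecMul _
  · intro h1
    subst h1
    intro ν hν
    rw [hv, u_lam_mul]
    have h2 : ∀ α : Idx d 2,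
        a2 α * u (MvPolynomial.monomial (Finsupp.equivFunOnFinite.symm α.1 + ν) 1) = 0 := by
      intro α
      rw [hcs _ (by rw [sum_add_deg, iota_sum_idx]; exact Even.add_odd even_two hν), mul_zero]
    rw [Finset.sum_congr rfl (fun α _ => h2 α), Finset.sum_const_zero, zero_add,
      hcs _ hν, mul_zero, add_zero]
    simp
end
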